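/- arXiv:2108.12281 — 2 statements merged into one kernel-verified Lean document; each statement's English description precedes it below -/
import Mathlib

section
/- Overlap of Lyndon words: let w₁ and w₂ be distinct Lyndon words with w₁ = e₁e₂ and w₂ = e₂e₃ for nonempty words e₁, e₂, e₃. Then the word e₁e₂e₃ is again a Lyndon word. -/
/-- The paper's lexicographic "greater than" on words. -/
def paperGt {X : Type*} [LinearOrder X] (u v : List X) : Prop :=
  List.Lex (· > ·) u v

/-- A Lyndon-Shirshov word in the paper's convention: `u = vw > wv`
lexicographically for every factorization into nonempty words. -/
def IsLSWord {X : Type*} [LinearOrder X] (u : List X) : Prop :=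
  u ≠ [] ∧ ∀ v w : List X, v ≠ [] → w ≠ [] → u = v ++ w →
    paperGt (v ++ w) (w ++ v)

section Aux

variable {α : Type*} {r : α → α → Prop}

private theorem lex_trans' [IsTrans α r] :
    ∀ {x y z : List α}, List.Lex r x y → List.Lex r y z → List.Lex r x z
  | _, _, _, List.Lex.nil, List.Lex.cons _ => List.Lex.nil
  | _, _, _, List.Lex.nil, List.Lex.rel _ => List.Lex.nil
  | _, _, _, List.Lex.cons h₁, List.Lex.cons h₂ => List.Lex.cons (lex_trans' h₁ h₂)
  | _, _, _, List.Lex.cons _, List.Lex.rel h₂ => List.Lex.rel h₂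
  | _, _, _, List.Lex.rel h₁, List.Lex.cons _ => List.Lex.rel h₁
  | _, _, _, List.Lex.rel h₁, List.Lex.rel h₂ => List.Lex.rel (Trans.trans h₁ h₂)

/-- If `x > y` lexicographically and `x` is at least as long as `y`, the first
difference is strict, so appending anything preserves the inequality. -/
private theorem lex_append : ∀ {x y : List α}, List.Lex r x y → y.length ≤ x.length →
    ∀ c d : List α, List.Lex r (x ++ c) (y ++ d)
  | _, _, List.Lex.nil, hl, _, _ => by simp at hl
  | _, _, List.Lex.rel h, _, _, _ => List.Lex.rel h
  | _, _, List.Lex.cons h, hl, c, d =>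
      List.Lex.cons (lex_append h (by simpa using hl) c d)

private theorem lex_of_lex_append_left [IsIrrefl α r] :
    ∀ (s : List α) {u v : List α}, List.Lex r (s ++ u) (s ++ v) → List.Lex r u v
  | [], _, _, h => h
  | a :: s, u, v, h => by
    cases h with
    | cons h => exact lex_of_lex_append_left s h
    | rel h => exact absurd h (irrefl a)

private theorem lex_prefix_or : ∀ {x y : List α}, List.Lex r x y →
    x <+: y ∨ ∀ c d : List α, List.Lex r (x ++ c) (y ++ d)
  | _, _, List.Lex.nil => Or.inl List.nil_prefix
  | _, _, List.Lex.rel h => Or.inr fun _ _ => List.Lex.rel h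
  | _, _, @List.Lex.cons _ _ a _ _ h => by
    rcases lex_prefix_or h with hp | hs
    · exact Or.inl (List.cons_prefix_cons.mpr ⟨rfl, hp⟩)
    · exact Or.inr fun c d => List.Lex.cons (hs c d)

end Aux

/-- A Lyndon–Shirshov word is (paper-)greater than each of its proper
nonempty suffixes. -/
private theorem ls_lex_suffix {X : Type*} [LinearOrder X] {w a b : List X}
    (hw : IsLSWord w) (ha : a ≠ []) (hb : b ≠ []) (heq : w = a ++ b) :
    List.Lex (· > ·) w b := by
  rcases trichotomous_of (List.Lex (· > ·)) w b with h | h | h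
  · exact h
  · exfalso
    have := congrArg List.length (heq.symm.trans h)
    simp only [List.length_append] at this
    exact ha (List.eq_nil_of_length_eq_zero (by omega))
  · exfalso
    have r1 : List.Lex (· > ·) (a ++ b) (b ++ a) := hw.2 a b ha hb heq
    rcases lex_prefix_or h with hp | hs
    · -- border case: `b` is both a suffix and a prefix of `w`
      obtain ⟨c, hc⟩ := hp
      have hc0 : c ≠ [] := by
        rintro rfl
        rw [List.append_nil] at hc
        have := congrArg List.length (heq.symm.trans hc.symm)
        simp only [List.length_append] at this
        exact ha (List.eq_nil_of_length_eq_zero (by omega))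
      have r2 : List.Lex (· > ·) (b ++ c) (c ++ b) := hw.2 b c hb hc0 hc.symm
      have r1' : List.Lex (· > ·) (b ++ c) (b ++ a) := by
        rw [hc, heq]; exact r1
      have hca : List.Lex (· > ·) c a := lex_of_lex_append_left b r1'
      have hlen : a.length ≤ c.length := by
        have h1 := congrArg List.length heq
        have h2 := congrArg List.length hc
        simp only [List.length_append] at h1 h2
        omega
      have h3 : List.Lex (· > ·) (c ++ b) (a ++ b) := lex_append hca hlen b b
      rw [← heq, ← hc] at h3
      exact asymm r2 h3
    · have h4 := hs a []
      rw [List.append_nil] at h4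
      rw [← heq] at r1
      exact asymm r1 h4

/-- Overlap of distinct Lyndon-Shirshov words: if `w₁ = e₁e₂` and
`w₂ = e₂e₃` are LS words with `w₁ ≠ w₂` and `e₁, e₂, e₃` nonempty, then
`e₁e₂e₃` is an LS word. -/
theorem lsword_overlap {X : Type*} [LinearOrder X] (e₁ e₂ e₃ : List X)
    (h₁ : e₁ ≠ []) (h₂ : e₂ ≠ []) (h₃ : e₃ ≠ [])
    (hw₁ : IsLSWord (e₁ ++ e₂)) (hw₂ : IsLSWord (e₂ ++ e₃))
    (hne : e₁ ++ e₂ ≠ e₂ ++ e₃) :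
    IsLSWord (e₁ ++ e₂ ++ e₃) := by
  -- `t = e₁e₂e₃` is greater than `v = e₂e₃`:
  have tv : List.Lex (· > ·) (e₁ ++ e₂ ++ e₃) (e₂ ++ e₃) := by
    have h1 : List.Lex (· > ·) (e₁ ++ e₂) e₂ := ls_lex_suffix hw₁ h₁ h₂ rfl
    exact lex_append h1 (by simp) e₃ e₃
  constructor
  · simp [h₁]
  · intro a b ha hb heq
    -- key step: `t` is greater than its proper suffix `b`
    have key : List.Lex (· > ·) (e₁ ++ e₂ ++ e₃) b := by
      have hlt := congrArg List.length heq
      simp only [List.length_append] at hlt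
      by_cases hcase : b.length ≤ (e₂ ++ e₃).length
      · -- `b` is a suffix of `v = e₂e₃`
        have hpre : e₁ <+: a := by
          refine List.prefix_of_prefix_length_le ⟨e₂ ++ e₃, by simp⟩ ⟨b, heq.symm⟩ ?_
          simp only [List.length_append] at hcase ⊢
          omega
        obtain ⟨p, hp⟩ := hpre
        have hv : p ++ b = e₂ ++ e₃ := by
          apply List.append_cancel_left (as := e₁)
          rw [← List.append_assoc, hp, ← heq, List.append_assoc]
        obtain rfl | hpne := eq_or_ne p []
        · rw [show b = e₂ ++ e₃ by simpa using hv]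
          exact tv
        · exact lex_trans' tv (ls_lex_suffix hw₂ hpne hb hv.symm)
      · -- `b` is longer than `v`; then `a` is a proper prefix of `e₁`
        have hpre : a <+: e₁ := by
          refine List.prefix_of_prefix_length_le ⟨b, heq.symm⟩ ⟨e₂ ++ e₃, by simp⟩ ?_
          simp only [List.length_append, not_le] at hcase ⊢
          omega
        obtain ⟨a', ha'⟩ := hpre
        have ha'ne : a' ≠ [] := by
          rintro rfl
          rw [List.append_nil] at ha'
          apply hcase
          have := congrArg List.length ha'
          simp only [List.length_append] at hcase ⊢
          omega
        have hb' : b = a' ++ (e₂ ++ e₃) := by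
          apply List.append_cancel_left (as := a)
          rw [← heq, ← List.append_assoc, ha', List.append_assoc]
        have hsuf : List.Lex (· > ·) (e₁ ++ e₂) (a' ++ e₂) := by
          refine ls_lex_suffix hw₁ ha (fun h => h₂ (List.append_eq_nil_iff.mp h).2) ?_
          rw [← List.append_assoc, ha']
        have hlen2 : (a' ++ e₂).length ≤ (e₁ ++ e₂).length := by
          have := congrArg List.length ha'
          simp only [List.length_append] at this ⊢
          omega
        have h5 := lex_append hsuf hlen2 e₃ e₃
        have h6 : List.Lex (· > ·) (e₁ ++ e₂ ++ e₃) (a' ++ (e₂ ++ e₃)) := by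
          rw [← List.append_assoc]; exact h5
        rw [hb']; exact h6
    -- conclude the rotation inequality
    have hlen : b.length ≤ (e₁ ++ e₂ ++ e₃).length := by
      have := congrArg List.length heq
      simp only [List.length_append] at this ⊢
      omega
    have h7 := lex_append key hlen [] a
    rw [List.append_nil] at h7
    show List.Lex (· > ·) (a ++ b) (b ++ a)
    rwa [heq] at h7
end

section
/- Standard factorization produces Lyndon words: if u is a Lyndon word of length ≥ 2 and u = vw where w is the longest proper Lyndon suffix of u (equivalently, the lexicographically smallest proper nonempty suffix), then v is also a Lyndon word and v < w lexicographically. -/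
/-!
The longest proper Lyndon suffix `w` of `u` is also its smallest proper suffix: a proper suffix
`t < w` would have a Lyndon suffix `s ≤ t` (descend through non-Lyndon suffixes), which by
maximality is a proper suffix of `w`, so `w < s`. Now if `v = ab` with `b ≤ v`, either `b` and
`v` differ at some position, and then `bw < vw = u`, or `v = bc`, and then `u = bcw < bw` forces
`cw < w`; both contradict `u` being Lyndon or `w` being smallest.
-/

/-- A Lyndon word in the standard convention: a nonempty word strictly
smaller than all of its proper nonempty suffixes. -/
def IsLyndon {X : Type*} [LinearOrder X] (u : List X) : Prop :=
  u ≠ [] ∧ ∀ v w : List X, v ≠ [] → w ≠ [] → u = v ++ w →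
    List.Lex (· < ·) u w

namespace List
variable {α : Type*} [LinearOrder α]

theorem lt_append_of_ne_nil (l : List α) {l' : List α} (h : l' ≠ []) : l < l ++ l' := by
  obtain ⟨a, t, rfl⟩ := exists_cons_of_ne_nil h
  simpa using append_left_lt (l₁ := l) (Lex.nil : Lex (· < ·) [] (a :: t))

theorem lt_of_append_lt_append_left {l l₁ l₂ : List α} (h : l ++ l₁ < l ++ l₂) :
    l₁ < l₂ := by
  induction l with
  | nil => exact h
  | cons a l ih => exact ih (lex_cons_iff.1 h)

theorem isPrefix_or_append_lt_append {l₁ l₂ : List α} (h : l₁ < l₂) (t₁ t₂ : List α) :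
    l₁ <+: l₂ ∨ l₁ ++ t₁ < l₂ ++ t₂ := by
  induction h with
  | nil => exact .inl nil_prefix
  | cons _ ih => exact ih.imp (cons_prefix_cons.2 ⟨rfl, ·⟩) Lex.cons
  | rel hab => exact .inr (Lex.rel hab)

end List

section Lyndon
variable {X : Type*} [LinearOrder X]

theorem IsLyndon.lt_of_append_eq {u p t : List X} (hu : IsLyndon u) (hp : p ≠ []) (ht : t ≠ [])
    (h : u = p ++ t) : u < t :=
  hu.2 p t hp ht h

theorem exists_isLyndon_suffix_le {x : List X} (hx : x ≠ []) :
    ∃ s, IsLyndon s ∧ s <:+ x ∧ s ≤ x := by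
  by_cases hL : IsLyndon x
  · exact ⟨x, hL, List.suffix_refl x, le_rfl⟩
  obtain ⟨p, q, hp, hq, rfl, hqx⟩ :
      ∃ p q, p ≠ [] ∧ q ≠ [] ∧ x = p ++ q ∧ q ≤ x := by
    simpa [IsLyndon, hx] using hL
  have : q.length < (p ++ q).length := by simpa using List.length_pos_iff.2 hp
  obtain ⟨s, hs, hsq, hle⟩ := exists_isLyndon_suffix_le hq
  exact ⟨s, hs, hsq.trans (List.suffix_append p q), hle.trans hqx⟩
termination_by x.length

theorem longest_lyndon_suffix_le {u w : List X} (hwu : w <:+ u) (hw : IsLyndon w)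
    (hmax : ∀ v' w' : List X, v' ≠ [] → w' ≠ [] → u = v' ++ w' →
      IsLyndon w' → w'.length ≤ w.length)
    {p t : List X} (hp : p ≠ []) (ht : t ≠ []) (h : u = p ++ t) : w ≤ t := by
  by_contra! htw
  obtain ⟨s, hs, ⟨q, rfl⟩, hst⟩ := exists_isLyndon_suffix_le ht
  have hsw : s < w := hst.trans_lt htw
  have hsu : u = (p ++ q) ++ s := by simp [h]
  obtain ⟨r, rfl⟩ : s <:+ w := List.suffix_of_suffix_length_le ⟨p ++ q, hsu.symm⟩ hwu
    (hmax _ _ (by simp [hp]) hs.1 hsu hs)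
  have hr : r ≠ [] := by
    rintro rfl
    exact hsw.ne rfl
  exact hsw.not_gt (hw.lt_of_append_eq hr hs.1 rfl)

theorem isLyndon_left_factor_of_minimal_suffix {u v w : List X} (hu : IsLyndon u)
    (hsplit : u = v ++ w) (hv : v ≠ []) (hw : w ≠ [])
    (hmin : ∀ p t, p ≠ [] → t ≠ [] → u = p ++ t → w ≤ t) :
    IsLyndon v := by
  refine ⟨hv, fun a b ha hb hab => ?_⟩
  change v < b
  by_contra! hbv_le
  have hub : u < b ++ w := hu.lt_of_append_eq ha (by simp [hb]) (by simp [hsplit, hab])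
  have hbv : b < v := hbv_le.lt_of_ne fun hbv =>
    ha (by simpa [← hbv] using congrArg List.length hab)
  rcases List.isPrefix_or_append_lt_append hbv w w with ⟨c, rfl⟩ | hlt
  · have hwc : w ≤ c ++ w := hmin b (c ++ w) hb (by simp [hw]) (by simp [hsplit])
    rw [hsplit, List.append_assoc] at hub
    exact hwc.not_gt (List.lt_of_append_lt_append_left hub)
  · exact hub.not_gt (hsplit ▸ hlt)

end Lyndon

theorem lyndon_standard_factorization_general {X : Type*} [LinearOrder X]
    (u v w : List X) (hu : IsLyndon u)
    (hsplit : u = v ++ w) (hv : v ≠ []) (hw : w ≠ []) (hwl : IsLyndon w)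
    (hmax : ∀ v' w' : List X, v' ≠ [] → w' ≠ [] → u = v' ++ w' →
      IsLyndon w' → w'.length ≤ w.length) :
    IsLyndon v ∧ List.Lex (· < ·) v w :=
  ⟨isLyndon_left_factor_of_minimal_suffix hu hsplit hv hw
      fun _ _ hp ht h => longest_lyndon_suffix_le ⟨v, hsplit.symm⟩ hwl hmax hp ht h,
    (List.lt_append_of_ne_nil v hw).trans (hsplit ▸ hu.lt_of_append_eq hv hw hsplit)⟩

/-- Standard factorization: if `u` is a Lyndon word of length ≥ 2 and
`u = vw` where `w` is the longest proper Lyndon suffix of `u`, then `v` is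
a Lyndon word and `v < w`. -/
theorem lyndon_standard_factorization {X : Type*} [LinearOrder X]
    (u v w : List X) (hu : IsLyndon u) (hlen : 2 ≤ u.length)
    (hsplit : u = v ++ w) (hv : v ≠ []) (hw : w ≠ []) (hwl : IsLyndon w)
    (hmax : ∀ v' w' : List X, v' ≠ [] → w' ≠ [] → u = v' ++ w' →
      IsLyndon w' → w'.length ≤ w.length) :
    IsLyndon v ∧ List.Lex (· < ·) v w :=
  lyndon_standard_factorization_general u v w hu hsplit hv hw hwl hmax
end
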